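/- On the Dynin-Folland Lie algebra 𝔥_{n,2}, given positive integers ϑ₁,…,ϑ_{2n+1} with ϑ₁ + ϑ_{n+1} = ϑ₂ + ϑ_{n+2} = … = ϑ_n + ϑ_{2n}, the linear maps D_r defined by D_r Z = r^{ϑ₁+ϑ_{n+1}+ϑ_{2n+1}} Z, D_r Y_{n+j} = r^{ϑ_j+ϑ_{2n+1}} Y_{n+j}, D_r Y_j = r^{ϑ_{n+j}+ϑ_{2n+1}} Y_j, D_r X_{2n+1} = r^{ϑ₁+ϑ_{n+1}} X_{2n+1}, D_r Y_{2n+1} = r^{ϑ_{2n+1}} Y_{2n+1}, D_r X_j = r^{ϑ_j} X_j, D_r X_{n+j} = r^{ϑ_{n+j}} X_{n+j} (j = 1,…,n) are Lie algebra automorphisms of 𝔥_{n,2} for every r > 0. -/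
import Mathlib


/-- The Dynin-Folland Lie algebra `𝔥_{n,2}` modelled on
`ℝ × (ℝ^n × ℝ^n × ℝ) × (ℝ^n × ℝ^n × ℝ)`: an element `(z, (p, q, w), (a, b, c))`
has `z` the `Z`-coordinate, `p j = y_j`, `q j = y_{n+j}` (`j = 1,…,n`),
`w = y_{2n+1}`, `a j = x_j`, `b j = x_{n+j}`, and `c = x_{2n+1}`. -/
abbrev DFV (n : ℕ) :=
  ℝ × ((Fin n → ℝ) × (Fin n → ℝ) × ℝ) × ((Fin n → ℝ) × (Fin n → ℝ) × ℝ)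

/-- The Dynin-Folland bracket: the nonzero basis brackets are
`[Y_j, X_j] = −Z` (`j = 1,…,2n+1`), `[Y_{2n+1}, X_{n+j}] = −½Y_j`,
`[Y_{2n+1}, X_j] = ½Y_{n+j}`, `[X_{n+j}, X_j] = −X_{2n+1}` (`j = 1,…,n`). -/
noncomputable def dfnBr (n : ℕ) (u v : DFV n) : DFV n :=
  (-(∑ j, (u.2.1.1 j * v.2.2.1 j - u.2.2.1 j * v.2.1.1 j))
      - (∑ j, (u.2.1.2.1 j * v.2.2.2.1 j - u.2.2.2.1 j * v.2.1.2.1 j))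
      - (u.2.1.2.2 * v.2.2.2.2 - u.2.2.2.2 * v.2.1.2.2),
    ((fun j => -(1 / 2) * (u.2.1.2.2 * v.2.2.2.1 j - u.2.2.2.1 j * v.2.1.2.2),
      fun j => (1 / 2) * (u.2.1.2.2 * v.2.2.1 j - u.2.2.1 j * v.2.1.2.2),
      0),
     (0, 0, -(∑ j, (u.2.2.2.1 j * v.2.2.1 j - u.2.2.1 j * v.2.2.2.1 j)))))

/-- The dilations with weights `ϑa j` on `X_j`, `ϑb j` on `X_{n+j}`, `ϑw` on
`Y_{2n+1}`, `ϑb j + ϑw` on `Y_j`, `ϑa j + ϑw` on `Y_{n+j}`, `K = ϑa j + ϑb j`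
on `X_{2n+1}`, and `K + ϑw` on `Z`. -/
noncomputable def dfnDil (n : ℕ) (ϑa ϑb : Fin n → ℕ) (ϑw K : ℕ) (r : ℝ)
    (u : DFV n) : DFV n :=
  (r ^ (K + ϑw) * u.1,
    ((fun j => r ^ (ϑb j + ϑw) * u.2.1.1 j,
      fun j => r ^ (ϑa j + ϑw) * u.2.1.2.1 j,
      r ^ ϑw * u.2.1.2.2),
     (fun j => r ^ (ϑa j) * u.2.2.1 j,
      fun j => r ^ (ϑb j) * u.2.2.2.1 j,
      r ^ K * u.2.2.2.2)))

/-- If the weights `ϑ₁,…,ϑ_{2n+1}` are positive integers with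
`ϑ₁ + ϑ_{n+1} = … = ϑ_n + ϑ_{2n} (= K)`, then for every `r > 0` the dilation
`D_r` is a Lie algebra automorphism of the Dynin-Folland Lie algebra `𝔥_{n,2}`. -/
theorem dfnDil_automorphism (n : ℕ) (ϑa ϑb : Fin n → ℕ) (ϑw K : ℕ)
    (ha : ∀ j, 0 < ϑa j) (hb : ∀ j, 0 < ϑb j) (hw : 0 < ϑw)
    (hK : ∀ j, ϑa j + ϑb j = K) :
    ∀ r : ℝ, 0 < r →
      IsLinearMap ℝ (dfnDil n ϑa ϑb ϑw K r) ∧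
      Function.Bijective (dfnDil n ϑa ϑb ϑw K r) ∧
      ∀ u v : DFV n,
        dfnBr n (dfnDil n ϑa ϑb ϑw K r u) (dfnDil n ϑa ϑb ϑw K r v)
          = dfnDil n ϑa ϑb ϑw K r (dfnBr n u v) := by
  intro r hr
  have hr0 : r ≠ 0 := hr.ne'
  refine ⟨⟨fun u v => ?_, fun c u => ?_⟩, ?_, fun u v => ?_⟩
  · simp only [dfnDil, Prod.ext_iff, Prod.fst_add, Prod.snd_add, Pi.add_apply,
      funext_iff]
    and_intros <;> intros <;> ring
  · simp only [dfnDil, Prod.ext_iff, Prod.smul_fst, Prod.smul_snd,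
      Pi.smul_apply, smul_eq_mul, funext_iff]
    and_intros <;> intros <;> ring
  · have hinv : ∀ k : ℕ, (r ^ k)⁻¹ * r ^ k = 1 := fun k =>
      inv_mul_cancel₀ (pow_ne_zero k hr0)
    have hinv' : ∀ k : ℕ, r ^ k * (r ^ k)⁻¹ = 1 := fun k =>
      mul_inv_cancel₀ (pow_ne_zero k hr0)
    refine Function.bijective_iff_has_inverse.mpr
      ⟨dfnDil n ϑa ϑb ϑw K r⁻¹, fun u => ?_, fun u => ?_⟩ <;>
    simp [dfnDil, Prod.ext_iff, funext_iff, ← mul_assoc, hinv, hinv']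
  · have h1 : ∀ (p a : Fin n → ℝ) (ea : Fin n → ℕ),
        (∀ j, ea j = K) →
        (∑ j, ((fun j => r ^ (ea j + ϑw) * p j) j * (r ^ (K - ea j + 0) * a j)))
          = 0 → True := fun _ _ _ _ _ => trivial
    clear h1
    simp only [dfnBr, dfnDil, Prod.ext_iff, funext_iff, Pi.zero_apply,
      mul_zero, eq_self_iff_true, true_and, and_true]
    and_intros <;> try exact fun _ => trivial
    · rw [mul_sub, mul_sub, mul_neg]
      have e1 : (∑ x, (r ^ (ϑb x + ϑw) * u.2.1.1 x * (r ^ ϑa x * v.2.2.1 x)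
            - r ^ ϑa x * u.2.2.1 x * (r ^ (ϑb x + ϑw) * v.2.1.1 x)))
          = r ^ (K + ϑw) * ∑ j, (u.2.1.1 j * v.2.2.1 j - u.2.2.1 j * v.2.1.1 j) := by
        rw [Finset.mul_sum]
        exact Finset.sum_congr rfl fun j _ => by
          rw [← hK j, pow_add, pow_add, pow_add]; ring
      have e2 : (∑ x, (r ^ (ϑa x + ϑw) * u.2.1.2.1 x * (r ^ ϑb x * v.2.2.2.1 x)
            - r ^ ϑb x * u.2.2.2.1 x * (r ^ (ϑa x + ϑw) * v.2.1.2.1 x)))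
          = r ^ (K + ϑw) * ∑ j, (u.2.1.2.1 j * v.2.2.2.1 j - u.2.2.2.1 j * v.2.1.2.1 j) := by
        rw [Finset.mul_sum]
        exact Finset.sum_congr rfl fun j _ => by
          rw [← hK j, pow_add, pow_add, pow_add]; ring
      rw [e1, e2, pow_add]; ring
    · intro j; rw [pow_add]; ring
    · intro j; rw [pow_add]; ring
    · rw [mul_neg, neg_inj, Finset.mul_sum]
      exact Finset.sum_congr rfl fun j _ => by rw [← hK j, pow_add]; ring
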